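/- Let k ≥ 0, d = 4k+2, and let t = (t_1,...,t_n) ∈ ℤ^n with each t_i even and |t_i| ≤ 2k-2. For the cube R = [0,d]^n in ℤ^n, there is a proper edge (2n+1)-coloring of the edges in R and adjacent to R such that: (1) for each i, all edges adjacent to R parallel to e_i have the same color c_i, and (2) the (2n+1)-st color is used only on edges of the t-shifted core K + t, where K = [d/2-1, d/2+1]^n. -/
import Mathlib


/-- An edge of the grid graph on ℤ^n, recorded as its left endpoint together with the
direction `i`; the edge joins `e.1` and `e.1 + e_i`. -/
abbrev GridEdge (n : ℕ) := (Fin n → ℤ) × Fin n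

/-- The right endpoint `e.1 + e_i` of a grid edge. -/
def rightEnd {n : ℕ} (e : GridEdge n) : Fin n → ℤ := e.1 + Pi.single e.2 1

/-- Two grid edges share a vertex. -/
def sharesVertex {n : ℕ} (e f : GridEdge n) : Prop :=
  e.1 = f.1 ∨ e.1 = rightEnd f ∨ rightEnd e = f.1 ∨ rightEnd e = rightEnd f

/-- `x` is a vertex of the rectangle `[b_1, b_1+a_1] × ⋯ × [b_n, b_n+a_n]`. -/
def inRect {n : ℕ} (b : Fin n → ℤ) (a : Fin n → ℕ) (x : Fin n → ℤ) : Prop :=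
  ∀ i, b i ≤ x i ∧ x i ≤ b i + (a i : ℤ)

/-- The grid edge `e` lies in the rectangle: both endpoints are in it. -/
def edgeIn {n : ℕ} (b : Fin n → ℤ) (a : Fin n → ℕ) (e : GridEdge n) : Prop :=
  inRect b a e.1 ∧ inRect b a (rightEnd e)

/-- The grid edge `e` is adjacent to the rectangle: not in it, but shares a vertex with it. -/
def edgeAdj {n : ℕ} (b : Fin n → ℤ) (a : Fin n → ℕ) (e : GridEdge n) : Prop :=
  ¬ edgeIn b a e ∧ (inRect b a e.1 ∨ inRect b a (rightEnd e))

namespace CubeCol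

noncomputable section
open Classical Finset

/-- `Lo s v`: `v` is the low member of its pair relative to center `s`. -/
def Lo (s v : ℤ) : Prop := (v < s ∧ v % 2 = 0) ∨ (s < v ∧ v % 2 = 1)

/-- pair index of position `v` relative to center `s`. -/
def piF (s v : ℤ) : ℤ := if v < s then v / 2 else (v - 1) / 2

/-- low position of pair index `r` relative to center `s`. -/
def loPosF (s r : ℤ) : ℤ := if 2 * r < s then 2 * r else 2 * r + 1

/-- phase function with flip after position `D`. -/
def phiF (D p : ℤ) : ℤ := (p + 1 + (if D < p then 1 else 0)) % 2

lemma phiF01 (D p : ℤ) : phiF D p = 0 ∨ phiF D p = 1 := by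
  unfold phiF; split <;> omega

lemma phiF_succ (D p : ℤ) (h : p ≠ D) : phiF D p ≠ phiF D (p + 1) := by
  unfold phiF; split_ifs <;> omega

lemma lo_succ {s v : ℤ} (hs : s % 2 = 0) (h : Lo s v) :
    ¬ Lo s (v + 1) ∧ v + 1 ≠ s ∧ piF s (v + 1) = piF s v ∧ v ≠ s := by
  unfold Lo piF at *; split_ifs <;> omega

lemma lo_pred {s v : ℤ} (hs : s % 2 = 0) (hs2 : 2 ≤ s) (hv : ¬ Lo s v) (hne : v ≠ s)
    (h0 : 0 ≤ v) : Lo s (v - 1) ∧ piF s (v - 1) = piF s v ∧ 1 ≤ v ∧ v - 1 ≠ s := by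
  unfold Lo piF at *; split_ifs <;> omega

lemma lo_not_adj {s v : ℤ} (hs : s % 2 = 0) (h1 : Lo s v) (h2 : Lo s (v + 1)) : False := by
  unfold Lo at *; omega

lemma piF_bounds {K s v : ℤ} (hs : s % 2 = 0) (hs2 : 2 ≤ s) (hs3 : s ≤ 4 * K - 2)
    (h0 : 0 ≤ v) (h1 : v ≤ 4 * K + 2) (hne : v ≠ s) : 0 ≤ piF s v ∧ piF s v ≤ 2 * K := by
  unfold piF; split <;> omega

lemma loPosF_spec {K s r : ℤ} (hs : s % 2 = 0) (hs2 : 2 ≤ s) (hs3 : s ≤ 4 * K - 2)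
    (hr : 0 ≤ r) (hr2 : r ≤ 2 * K) :
    Lo s (loPosF s r) ∧ piF s (loPosF s r) = r ∧ 0 ≤ loPosF s r ∧ loPosF s r ≤ 4 * K + 1 := by
  unfold Lo piF loPosF; split_ifs <;> omega

lemma loPosF_pi_self {s v : ℤ} (hs : s % 2 = 0) (h : Lo s v) (h0 : 0 ≤ v) :
    loPosF s (piF s v) = v := by
  unfold Lo piF loPosF at *; split_ifs <;> omega

variable {n : ℕ}

def Mset (s x : Fin n → ℤ) (i : Fin n) : Finset (Fin n) :=
  Finset.univ.filter (fun j => j ≠ i ∧ x j ≠ s j ∧ piF (s j) (x j) = piF (s i) (x i))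

def suppF (s x : Fin n → ℤ) (i : Fin n) : Finset (Fin n) :=
  Finset.univ.filter (fun j => j ≠ i ∧ x j ≠ s j)

def Defect (s x : Fin n → ℤ) (i : Fin n) : Prop := Lo (s i) (x i) ∧ (Mset s x i).Nonempty

def DefPos (s x : Fin n → ℤ) (i : Fin n) : ℤ :=
  if h : (suppF s x i).Nonempty then
    loPosF (s i) (piF (s ((suppF s x i).min' h)) (x ((suppF s x i).min' h)))
  else s i + 1

def cnext (G : Finset (Fin n)) (i : Fin n) : Fin n :=
  if h : (G.filter (fun j => i < j)).Nonempty then (G.filter (fun j => i < j)).min' h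
  else if h2 : G.Nonempty then G.min' h2 else i

def partnerF (s x : Fin n → ℤ) (i : Fin n) : Fin n := cnext (insert i (Mset s x i)) i

def cInt (s x : Fin n → ℤ) (i : Fin n) : ℤ :=
  if Defect s x i then
    2 * (partnerF s x i).1 +
      (1 - phiF (DefPos s x (partnerF s x i))
        (if Lo (s (partnerF s x i)) (x (partnerF s x i)) then x (partnerF s x i) - 1
         else x (partnerF s x i)))
  else if (suppF s x i) = ∅ ∧ x i = s i + 1 then 2 * n
  else 2 * i.1 + phiF (DefPos s x i) (x i)

lemma mem_Mset {s x : Fin n → ℤ} {i j : Fin n} :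
    j ∈ Mset s x i ↔ j ≠ i ∧ x j ≠ s j ∧ piF (s j) (x j) = piF (s i) (x i) := by
  simp [Mset]

lemma mem_suppF {s x : Fin n → ℤ} {i j : Fin n} :
    j ∈ suppF s x i ↔ j ≠ i ∧ x j ≠ s j := by
  simp [suppF]

lemma suppF_empty_iff {s x : Fin n → ℤ} {i : Fin n} :
    suppF s x i = ∅ ↔ ∀ m, m ≠ i → x m = s m := by
  constructor
  · intro h m hm
    by_contra hne
    have : m ∈ suppF s x i := mem_suppF.2 ⟨hm, hne⟩
    simp [h] at this
  · intro h
    ext m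
    simp only [mem_suppF, Finset.notMem_empty, iff_false, not_and]
    intro hm
    simp [h m hm]

lemma cnext_spec {G : Finset (Fin n)} {i : Fin n} (hi : i ∈ G)
    (h2 : ∃ j ∈ G, j ≠ i) : cnext G i ∈ G ∧ cnext G i ≠ i := by
  unfold cnext
  split_ifs with h hG
  · have hm := Finset.min'_mem _ h
    rw [Finset.mem_filter] at hm
    exact ⟨hm.1, by intro he; rw [he] at hm; exact lt_irrefl _ hm.2⟩
  · obtain ⟨j, hjG, hjne⟩ := h2
    have hji : j < i := by
      rcases lt_or_gt_of_ne hjne with h' | h'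
      · exact h'
      · exact absurd ⟨j, Finset.mem_filter.2 ⟨hjG, h'⟩⟩ h
    refine ⟨Finset.min'_mem _ hG, ?_⟩
    have := Finset.min'_le G j hjG
    intro he; rw [he] at this; exact absurd (lt_of_le_of_lt this hji) (lt_irrefl i)
  · exact absurd ⟨i, hi⟩ hG

lemma cnext_inj {G : Finset (Fin n)} {i j : Fin n} (hi : i ∈ G) (hj : j ∈ G)
    (hij : i ≠ j) : cnext G i ≠ cnext G j := by
  have key : ∀ a b : Fin n, a ∈ G → b ∈ G → a < b → cnext G a ≠ cnext G b := by
    intro a b ha hb hab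
    have hFa : ((G.filter (fun m => a < m))).Nonempty := ⟨b, Finset.mem_filter.2 ⟨hb, hab⟩⟩
    have ea : cnext G a = (G.filter (fun m => a < m)).min' hFa := by
      unfold cnext; rw [dif_pos hFa]
    have h1 : cnext G a ≤ b := by
      rw [ea]; exact Finset.min'_le _ b (Finset.mem_filter.2 ⟨hb, hab⟩)
    have h2 : a < cnext G a := by
      rw [ea]; exact (Finset.mem_filter.1 (Finset.min'_mem _ hFa)).2
    by_cases h : ((G.filter (fun m => b < m))).Nonempty
    · have eb : cnext G b = (G.filter (fun m => b < m)).min' h := by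
        unfold cnext; rw [dif_pos h]
      have hgt : b < cnext G b := by
        rw [eb]; exact (Finset.mem_filter.1 (Finset.min'_mem _ h)).2
      intro he; rw [he] at h1; exact absurd (lt_of_le_of_lt h1 hgt) (lt_irrefl _)
    · have hGne : G.Nonempty := ⟨a, ha⟩
      have eb : cnext G b = G.min' hGne := by
        unfold cnext; rw [dif_neg h, dif_pos hGne]
      have hle : cnext G b ≤ a := by rw [eb]; exact Finset.min'_le _ a ha
      intro he; rw [he] at h2; exact absurd (lt_of_lt_of_le h2 hle) (lt_irrefl _)
  rcases lt_or_gt_of_ne hij with h | h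
  · exact key i j hi hj h
  · exact (key j i hj hi h).symm

lemma partner_mem {s x : Fin n → ℤ} {i : Fin n} (h : (Mset s x i).Nonempty) :
    partnerF s x i ∈ Mset s x i := by
  obtain ⟨j, hj⟩ := h
  have hjne : j ≠ i := (mem_Mset.1 hj).1
  have := cnext_spec (G := insert i (Mset s x i)) (i := i) (Finset.mem_insert_self i _)
    ⟨j, Finset.mem_insert_of_mem hj, hjne⟩
  unfold partnerF
  rcases Finset.mem_insert.1 this.1 with h' | h'
  · exact absurd h' this.2
  · exact h'


lemma DefPos_congr {s x z : Fin n → ℤ} {i : Fin n}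
    (h : ∀ m, m ≠ i → (x m = s m ↔ z m = s m) ∧ piF (s m) (x m) = piF (s m) (z m)) :
    DefPos s x i = DefPos s z i := by
  have hsupp : suppF s x i = suppF s z i := by
    ext m
    by_cases hm : m = i
    · simp [mem_suppF, hm]
    · simp only [mem_suppF, hm, ne_eq, not_false_iff, true_and]
      exact not_congr (h m hm).1
  unfold DefPos
  rw [hsupp]
  split_ifs with hne
  · have hj := Finset.min'_mem _ hne
    have hji : (suppF s z i).min' hne ≠ i := (mem_suppF.1 hj).1
    rw [(h _ hji).2]
  · rfl

lemma DefPos_congr' {s x z : Fin n → ℤ} {i : Fin n}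
    (h : ∀ m, m ≠ i → x m = z m) : DefPos s x i = DefPos s z i := by
  refine DefPos_congr (fun m hm => ?_)
  rw [h m hm]
  exact ⟨Iff.rfl, rfl⟩

lemma DefPos_bounds {K : ℤ} {s x : Fin n → ℤ} {i : Fin n}
    (hsAll : ∀ m, s m % 2 = 0 ∧ 2 ≤ s m ∧ s m ≤ 4 * K - 2)
    (hx : ∀ m, m ≠ i → 0 ≤ x m ∧ x m ≤ 4 * K + 2) :
    0 ≤ DefPos s x i ∧ DefPos s x i ≤ 4 * K + 1 := by
  unfold DefPos
  split_ifs with h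
  · set j := (suppF s x i).min' h with hj
    have hjm := Finset.min'_mem _ h
    rw [← hj] at hjm
    obtain ⟨hji, hjs⟩ := mem_suppF.1 hjm
    obtain ⟨e1, e2, e3⟩ := hsAll j
    obtain ⟨f1, f2⟩ := hx j hji
    have hb := piF_bounds (K := K) e1 e2 e3 f1 f2 hjs
    obtain ⟨g1, g2, g3⟩ := hsAll i
    have := loPosF_spec (K := K) g1 g2 g3 hb.1 hb.2
    exact ⟨this.2.2.1, this.2.2.2⟩
  · obtain ⟨g1, g2, g3⟩ := hsAll i
    omega

lemma defect_at_DefPos {K : ℤ} {s x : Fin n → ℤ} {i : Fin n}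
    (hsAll : ∀ m, s m % 2 = 0 ∧ 2 ≤ s m ∧ s m ≤ 4 * K - 2)
    (hx : ∀ m, m ≠ i → 0 ≤ x m ∧ x m ≤ 4 * K + 2)
    (hsp : (suppF s x i).Nonempty) (hxi : x i = DefPos s x i) : Defect s x i := by
  have hDP : DefPos s x i =
      loPosF (s i) (piF (s ((suppF s x i).min' hsp)) (x ((suppF s x i).min' hsp))) := by
    unfold DefPos; rw [dif_pos hsp]
  set j := (suppF s x i).min' hsp with hj
  have hjm := Finset.min'_mem _ hsp
  rw [← hj] at hjm
  obtain ⟨hji, hjs⟩ := mem_suppF.1 hjm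
  obtain ⟨e1, e2, e3⟩ := hsAll j
  obtain ⟨f1, f2⟩ := hx j hji
  have hb := piF_bounds (K := K) e1 e2 e3 f1 f2 hjs
  obtain ⟨g1, g2, g3⟩ := hsAll i
  have hspec := loPosF_spec (K := K) g1 g2 g3 hb.1 hb.2
  constructor
  · rw [hxi, hDP]; exact hspec.1
  · refine ⟨j, mem_Mset.2 ⟨hji, hjs, ?_⟩⟩
    rw [hxi, hDP, hspec.2.1]

lemma phiF_mem (D p : ℤ) : 0 ≤ phiF D p ∧ phiF D p ≤ 1 := by
  unfold phiF; split <;> omega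

lemma cInt_bounds (s x : Fin n → ℤ) (i : Fin n) :
    0 ≤ cInt s x i ∧ cInt s x i < 2 * n + 1 := by
  unfold cInt
  have hp := (partnerF s x i).isLt
  have hi := i.isLt
  have h1 := phiF_mem (DefPos s x (partnerF s x i)) (x (partnerF s x i) - 1)
  have h2 := phiF_mem (DefPos s x (partnerF s x i)) (x (partnerF s x i))
  have h3 := phiF_mem (DefPos s x i) (x i)
  split_ifs <;> omega

lemma rightEnd_mk (x : Fin n → ℤ) (i m : Fin n) :
    rightEnd (x, i) m = x m + if m = i then 1 else 0 := by
  simp [rightEnd, Pi.single_apply]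

variable {k : ℕ}

lemma inRect_iff (x : Fin n → ℤ) :
    inRect (0 : Fin n → ℤ) (fun _ => 4*k+2) x ↔ ∀ m, 0 ≤ x m ∧ x m ≤ 4*(k:ℤ)+2 := by
  unfold inRect
  refine forall_congr' (fun m => ?_)
  simp only [Pi.zero_apply, zero_add]
  constructor <;> intro h <;> constructor <;> push_cast at h ⊢ <;> omega

lemma edgeIn_iff (x : Fin n → ℤ) (i : Fin n) :
    edgeIn 0 (fun _ => 4*k+2) (x, i) ↔
      (∀ m, m ≠ i → 0 ≤ x m ∧ x m ≤ 4*(k:ℤ)+2) ∧ 0 ≤ x i ∧ x i + 1 ≤ 4*(k:ℤ)+2 := by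
  unfold edgeIn
  rw [inRect_iff, inRect_iff]
  simp only [show ((x, i).1) = x from rfl, show ((x, i).2) = i from rfl]
  constructor
  · rintro ⟨h1, h2⟩
    have hri := h2 i
    rw [rightEnd_mk] at hri
    rw [if_pos rfl] at hri
    exact ⟨fun m _ => h1 m, (h1 i).1, hri.2⟩
  · rintro ⟨h1, h2, h3⟩
    constructor
    · intro m
      by_cases hm : m = i
      · subst hm; exact ⟨h2, by omega⟩
      · exact h1 m hm
    · intro m
      rw [rightEnd_mk]
      by_cases hm : m = i
      · subst hm; rw [if_pos rfl]; omega
      · simp only [if_neg hm]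
        have := h1 m hm; omega

lemma edgeAdj_iff (x : Fin n → ℤ) (i : Fin n) :
    edgeAdj 0 (fun _ => 4*k+2) (x, i) ↔
      (∀ m, m ≠ i → 0 ≤ x m ∧ x m ≤ 4*(k:ℤ)+2) ∧ (x i = -1 ∨ x i = 4*(k:ℤ)+2) := by
  unfold edgeAdj
  rw [edgeIn_iff, inRect_iff, inRect_iff]
  simp only [show ((x, i).1) = x from rfl, show ((x, i).2) = i from rfl]
  constructor
  · rintro ⟨hni, h⟩
    rcases h with h | h
    · refine ⟨fun m _ => h m, ?_⟩
      right
      by_contra hc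
      have hi := h i
      exact hni ⟨fun m _ => h m, hi.1, by omega⟩
    · have hm' : ∀ m, m ≠ i → 0 ≤ x m ∧ x m ≤ 4*(k:ℤ)+2 := by
        intro m hm
        have := h m
        rw [rightEnd_mk] at this
        simp only [if_neg hm] at this
        omega
      have hi' := h i
      rw [rightEnd_mk] at hi'
      rw [if_pos rfl] at hi'
      refine ⟨hm', ?_⟩
      left
      by_contra hc
      exact hni ⟨hm', by omega, by omega⟩
  · rintro ⟨h1, h2⟩
    have hIn : ¬ ((∀ m, m ≠ i → 0 ≤ x m ∧ x m ≤ 4*(k:ℤ)+2) ∧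
        0 ≤ x i ∧ x i + 1 ≤ 4*(k:ℤ)+2) := by
      rintro ⟨_, hb, hc⟩; omega
    rcases h2 with h2 | h2
    · refine ⟨hIn, Or.inr ?_⟩
      intro m
      rw [rightEnd_mk]
      by_cases hm : m = i
      · subst hm; rw [if_pos rfl]; omega
      · simp only [if_neg hm]
        have := h1 m hm; omega
    · refine ⟨hIn, Or.inl ?_⟩
      intro m
      by_cases hm : m = i
      · subst hm; omega
      · exact h1 m hm

lemma rel_iff (x : Fin n → ℤ) (i : Fin n) :
    (edgeIn 0 (fun _ => 4*k+2) (x, i) ∨ edgeAdj 0 (fun _ => 4*k+2) (x, i)) ↔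
      (∀ m, m ≠ i → 0 ≤ x m ∧ x m ≤ 4*(k:ℤ)+2) ∧ (-1 ≤ x i ∧ x i ≤ 4*(k:ℤ)+2) := by
  rw [edgeIn_iff, edgeAdj_iff]
  constructor
  · rintro (⟨h1, h2⟩ | ⟨h1, h2⟩)
    · exact ⟨h1, by omega⟩
    · exact ⟨h1, by omega⟩
  · rintro ⟨h1, h2⟩
    by_cases hc : 0 ≤ x i ∧ x i + 1 ≤ 4*(k:ℤ)+2
    · exact Or.inl ⟨h1, hc⟩
    · exact Or.inr ⟨h1, by omega⟩

lemma lo_ne {s v : ℤ} (h : Lo s v) : v ≠ s := by unfold Lo at h; omega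

lemma DefPos_empty {s x : Fin n → ℤ} {i : Fin n} (h : suppF s x i = ∅) :
    DefPos s x i = s i + 1 := by
  unfold DefPos
  rw [dif_neg]
  rw [Finset.not_nonempty_iff_eq_empty]
  exact h

lemma cInt_defect {s x : Fin n → ℤ} {i : Fin n} (h : Defect s x i) :
    cInt s x i = 2 * (partnerF s x i).1 +
      (1 - phiF (DefPos s x (partnerF s x i))
        (if Lo (s (partnerF s x i)) (x (partnerF s x i)) then x (partnerF s x i) - 1
         else x (partnerF s x i))) := by
  unfold cInt; rw [if_pos h]

lemma cInt_special {s x : Fin n → ℤ} {i : Fin n} (h1 : ¬ Defect s x i)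
    (h2 : suppF s x i = ∅ ∧ x i = s i + 1) : cInt s x i = 2 * n := by
  unfold cInt; rw [if_neg h1, if_pos h2]

lemma cInt_pair {s x : Fin n → ℤ} {i : Fin n} (h1 : ¬ Defect s x i)
    (h2 : ¬ (suppF s x i = ∅ ∧ x i = s i + 1)) :
    cInt s x i = 2 * i.1 + phiF (DefPos s x i) (x i) := by
  unfold cInt; rw [if_neg h1, if_neg h2]

lemma val_ne {a b : Fin n} (h : a ≠ b) : (a : ℕ) ≠ (b : ℕ) :=
  fun hc => h (Fin.ext hc)

lemma proper_line {K : ℤ} {s : Fin n → ℤ}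
    (hsAll : ∀ m, s m % 2 = 0 ∧ 2 ≤ s m ∧ s m ≤ 4 * K - 2)
    (x z : Fin n → ℤ) (i : Fin n)
    (hrest : ∀ m, m ≠ i → x m = z m)
    (hstep : z i = x i + 1)
    (hx : ∀ m, m ≠ i → 0 ≤ x m ∧ x m ≤ 4 * K + 2) :
    cInt s x i ≠ cInt s z i := by
  have hDP : DefPos s x i = DefPos s z i := DefPos_congr' hrest
  have hsupp : suppF s x i = suppF s z i := by
    ext m
    by_cases hm : m = i
    · simp [mem_suppF, hm]
    · simp only [mem_suppF, hm, ne_eq, not_false_iff, true_and]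
      rw [hrest m hm]
  by_cases Dx : Defect s x i <;> by_cases Dz : Defect s z i
  · exact absurd (by have h := Dz.1; rw [hstep] at h; exact h) (lo_succ (hsAll i).1 Dx.1).1
  · rw [cInt_defect Dx]
    have hpM := mem_Mset.1 (partner_mem Dx.2)
    have hpne := val_ne hpM.1
    have hp1 := phiF_mem (DefPos s x (partnerF s x i))
      (if Lo (s (partnerF s x i)) (x (partnerF s x i)) then x (partnerF s x i) - 1
       else x (partnerF s x i))
    by_cases hzs : suppF s z i = ∅ ∧ z i = s i + 1
    · rw [cInt_special Dz hzs]
      have := (partnerF s x i).isLt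
      omega
    · rw [cInt_pair Dz hzs]
      have hp2 := phiF_mem (DefPos s z i) (z i)
      omega
  · rw [cInt_defect Dz]
    have hpM := mem_Mset.1 (partner_mem Dz.2)
    have hpne := val_ne hpM.1
    have hp1 := phiF_mem (DefPos s z (partnerF s z i))
      (if Lo (s (partnerF s z i)) (z (partnerF s z i)) then z (partnerF s z i) - 1
       else z (partnerF s z i))
    by_cases hxs : suppF s x i = ∅ ∧ x i = s i + 1
    · rw [cInt_special Dx hxs]
      have := (partnerF s z i).isLt
      omega
    · rw [cInt_pair Dx hxs]
      have hp2 := phiF_mem (DefPos s x i) (x i)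
      omega
  · by_cases hxs : suppF s x i = ∅ ∧ x i = s i + 1 <;>
      by_cases hzs : suppF s z i = ∅ ∧ z i = s i + 1
    · omega
    · rw [cInt_special Dx hxs, cInt_pair Dz hzs]
      have hp2 := phiF_mem (DefPos s z i) (z i)
      have := i.isLt
      omega
    · rw [cInt_pair Dx hxs, cInt_special Dz hzs]
      have hp2 := phiF_mem (DefPos s x i) (x i)
      have := i.isLt
      omega
    · rw [cInt_pair Dx hxs, cInt_pair Dz hzs, ← hDP, hstep]
      have hne : x i ≠ DefPos s x i := by
        intro heq
        by_cases hsp : (suppF s x i).Nonempty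
        · exact Dx (defect_at_DefPos hsAll hx hsp heq)
        · rw [Finset.not_nonempty_iff_eq_empty] at hsp
          rw [DefPos_empty hsp] at heq
          exact hxs ⟨hsp, heq⟩
      have := phiF_succ (DefPos s x i) (x i) hne
      omega

/-- Free-colour case: `(x,i)` is a defect edge whose partner is `j`, and `(z,j)` is a
plain pair-coloured edge of direction `j` meeting it. -/
lemma proper_cross_dn {K : ℤ} {s : Fin n → ℤ}
    (hsAll : ∀ m, s m % 2 = 0 ∧ 2 ≤ s m ∧ s m ≤ 4 * K - 2)
    (x z : Fin n → ℤ) (i j : Fin n) (hij : i ≠ j)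
    (hrest : ∀ m, m ≠ i → m ≠ j → x m = z m)
    (hxj : x j = z j ∨ x j = z j + 1)
    (hzi : z i = x i ∨ z i = x i + 1)
    (hz2 : -1 ≤ z j ∧ z j ≤ 4 * K + 2)
    (Dx : Defect s x i) (Dz : ¬ Defect s z j) :
    cInt s x i ≠ cInt s z j := by
  rw [cInt_defect Dx]
  have hpM := mem_Mset.1 (partner_mem Dx.2)
  have hphi1 := phiF_mem (DefPos s x (partnerF s x i))
    (if Lo (s (partnerF s x i)) (x (partnerF s x i)) then x (partnerF s x i) - 1
     else x (partnerF s x i))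
  by_cases hzs : suppF s z j = ∅ ∧ z j = s j + 1
  · rw [cInt_special Dz hzs]
    have := (partnerF s x i).isLt
    omega
  · rw [cInt_pair Dz hzs]
    have hphi2 := phiF_mem (DefPos s z j) (z j)
    by_cases hpj : partnerF s x i = j
    · -- the genuine free-colour case
      rw [hpj] at hphi1 hpM ⊢
      obtain ⟨-, hxjs, hxjpi⟩ := hpM
      -- basic facts about x i and z i
      have hLxi := Dx.1
      have hxine : x i ≠ s i := lo_ne hLxi
      have hzipi : piF (s i) (z i) = piF (s i) (x i) ∧ z i ≠ s i := by
        rcases hzi with h | h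
        · rw [h]; exact ⟨rfl, hxine⟩
        · have := lo_succ (hsAll i).1 hLxi
          rw [h]; exact ⟨this.2.2.1, this.2.1⟩
      -- the defect positions of the j-lines through x and z agree
      have hDP : DefPos s x j = DefPos s z j := by
        refine DefPos_congr (fun m hm => ?_)
        by_cases hmi : m = i
        · subst hmi
          constructor
          · constructor <;> intro hc
            · exact absurd hc hxine
            · exact absurd hc hzipi.2
          · exact hzipi.1.symm
        · rw [hrest m hmi hm]
          exact ⟨Iff.rfl, rfl⟩
      -- the position of the non-defect j-edge equals z j
      have hpN : (if Lo (s j) (x j) then x j - 1 else x j) = z j := by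
        by_cases hL : Lo (s j) (x j)
        · rw [if_pos hL]
          have hne : x j ≠ z j := by
            intro heq
            apply Dz
            constructor
            · rw [← heq]; exact hL
            · refine ⟨i, mem_Mset.2 ⟨hij, hzipi.2, ?_⟩⟩
              rw [hzipi.1, ← heq, hxjpi]
          rcases hxj with h | h
          · exact absurd h hne
          · omega
        · rw [if_neg hL]
          rcases hxj with h | h
          · exact h
          · exfalso
            have hxj0 : 0 ≤ x j := by omega
            have hlp := lo_pred (hsAll j).1 (hsAll j).2.1 hL hxjs hxj0
            apply Dz
            constructor
            · have : z j = x j - 1 := by omega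
              rw [this]; exact hlp.1
            · refine ⟨i, mem_Mset.2 ⟨hij, hzipi.2, ?_⟩⟩
              rw [hzipi.1]
              have : z j = x j - 1 := by omega
              rw [this, hlp.2.1, hxjpi]
      rw [hpN, hDP]
      omega
    · have := val_ne hpj
      omega

/-- Both edges are defect edges. -/
lemma proper_cross_dd {K : ℤ} {s : Fin n → ℤ}
    (hsAll : ∀ m, s m % 2 = 0 ∧ 2 ≤ s m ∧ s m ≤ 4 * K - 2)
    (x z : Fin n → ℤ) (i j : Fin n) (hij : i ≠ j)
    (hrest : ∀ m, m ≠ i → m ≠ j → x m = z m)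
    (hxj : x j = z j ∨ x j = z j + 1)
    (hzi : z i = x i ∨ z i = x i + 1)
    (Dx : Defect s x i) (Dz : Defect s z j) :
    cInt s x i ≠ cInt s z j := by
  rw [cInt_defect Dx, cInt_defect Dz]
  have hphi1 := phiF_mem (DefPos s x (partnerF s x i))
    (if Lo (s (partnerF s x i)) (x (partnerF s x i)) then x (partnerF s x i) - 1
     else x (partnerF s x i))
  have hphi2 := phiF_mem (DefPos s z (partnerF s z j))
    (if Lo (s (partnerF s z j)) (z (partnerF s z j)) then z (partnerF s z j) - 1
     else z (partnerF s z j))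
  have hpq : partnerF s x i ≠ partnerF s z j := by
    intro hpq
    obtain ⟨hpi, hps, hppi⟩ := mem_Mset.1 (partner_mem Dx.2)
    obtain ⟨hqj, hqs, hqpi⟩ := mem_Mset.1 (partner_mem Dz.2)
    set p := partnerF s x i with hp
    have hpj : p ≠ j := by rw [hpq]; exact hqj
    -- r_e = r_f
    have hxp : x p = z p := hrest p hpi hpj
    have hre : piF (s j) (z j) = piF (s i) (x i) := by
      rw [← hqpi, ← hpq, ← hxp, hppi]
    have hLxi := Dx.1
    have hLzj := Dz.1
    have hxine : x i ≠ s i := lo_ne hLxi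
    have hzjne : z j ≠ s j := lo_ne hLzj
    have hzipi : piF (s i) (z i) = piF (s i) (x i) ∧ z i ≠ s i := by
      rcases hzi with h | h
      · rw [h]; exact ⟨rfl, hxine⟩
      · have := lo_succ (hsAll i).1 hLxi
        rw [h]; exact ⟨this.2.2.1, this.2.1⟩
    have hxjpi : piF (s j) (x j) = piF (s j) (z j) ∧ x j ≠ s j := by
      rcases hxj with h | h
      · rw [h]; exact ⟨rfl, hzjne⟩
      · have := lo_succ (hsAll j).1 hLzj
        rw [h]; exact ⟨this.2.2.1, this.2.1⟩
    -- the two (direction, pair-index) groups coincide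
    have hG : insert i (Mset s x i) = insert j (Mset s z j) := by
      ext m
      simp only [Finset.mem_insert, mem_Mset]
      constructor
      · rintro (hm | ⟨hmi, hms, hmp⟩)
        · subst hm
          right
          exact ⟨hij, hzipi.2, by rw [hzipi.1]; exact hre.symm⟩
        · by_cases hmj : m = j
          · left; exact hmj
          · right
            refine ⟨hmj, ?_, ?_⟩
            · rw [← hrest m hmi hmj]; exact hms
            · rw [← hrest m hmi hmj, hmp, ← hre]
      · rintro (hm | ⟨hmj, hms, hmp⟩)
        · subst hm
          right
          exact ⟨hij.symm, hxjpi.2, by rw [hxjpi.1]; exact hre⟩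
        · by_cases hmi : m = i
          · left; exact hmi
          · right
            refine ⟨hmi, ?_, ?_⟩
            · rw [hrest m hmi hmj]; exact hms
            · rw [hrest m hmi hmj, hmp, hre]
    have hiG : i ∈ insert i (Mset s x i) := Finset.mem_insert_self _ _
    have hjG : j ∈ insert i (Mset s x i) := by
      rw [hG]; exact Finset.mem_insert_self _ _
    have := cnext_inj hiG hjG hij
    unfold partnerF at hpq
    rw [← hG] at hpq
    exact this hpq
  have := val_ne hpq
  omega

lemma proper_cross {K : ℤ} {s : Fin n → ℤ}
    (hsAll : ∀ m, s m % 2 = 0 ∧ 2 ≤ s m ∧ s m ≤ 4 * K - 2)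
    (x z : Fin n → ℤ) (i j : Fin n) (hij : i ≠ j)
    (hrest : ∀ m, m ≠ i → m ≠ j → x m = z m)
    (hxj : x j = z j ∨ x j = z j + 1)
    (hzi : z i = x i ∨ z i = x i + 1)
    (hx2 : -1 ≤ x i ∧ x i ≤ 4 * K + 2)
    (hz2 : -1 ≤ z j ∧ z j ≤ 4 * K + 2) :
    cInt s x i ≠ cInt s z j := by
  by_cases Dx : Defect s x i <;> by_cases Dz : Defect s z j
  · exact proper_cross_dd hsAll x z i j hij hrest hxj hzi Dx Dz
  · exact proper_cross_dn hsAll x z i j hij hrest hxj hzi hz2 Dx Dz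
  · have hrest' : ∀ m, m ≠ j → m ≠ i → z m = x m := fun m h1 h2 => (hrest m h2 h1).symm
    exact (proper_cross_dn hsAll z x j i hij.symm hrest' hzi hxj hx2 Dz Dx).symm
  · by_cases hxs : suppF s x i = ∅ ∧ x i = s i + 1 <;>
      by_cases hzs : suppF s z j = ∅ ∧ z j = s j + 1
    · exfalso
      have h1 : z i = s i := suppF_empty_iff.1 hzs.1 i hij
      have h2 : x i = s i + 1 := hxs.2
      omega
    · rw [cInt_special Dx hxs, cInt_pair Dz hzs]
      have hb1 := phiF_mem (DefPos s z j) (z j)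
      have hb2 := j.isLt
      omega
    · rw [cInt_pair Dx hxs, cInt_special Dz hzs]
      have hb1 := phiF_mem (DefPos s x i) (x i)
      have hb2 := i.isLt
      omega
    · rw [cInt_pair Dx hxs, cInt_pair Dz hzs]
      have hb1 := phiF_mem (DefPos s x i) (x i)
      have hb2 := phiF_mem (DefPos s z j) (z j)
      have hb3 := val_ne hij
      omega

lemma proper_main {K : ℤ} {s : Fin n → ℤ}
    (hsAll : ∀ m, s m % 2 = 0 ∧ 2 ≤ s m ∧ s m ≤ 4 * K - 2)
    (x z : Fin n → ℤ) (i j : Fin n)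
    (hx : (∀ m, m ≠ i → 0 ≤ x m ∧ x m ≤ 4 * K + 2) ∧ (-1 ≤ x i ∧ x i ≤ 4 * K + 2))
    (hz : (∀ m, m ≠ j → 0 ≤ z m ∧ z m ≤ 4 * K + 2) ∧ (-1 ≤ z j ∧ z j ≤ 4 * K + 2))
    (hne : ¬ (x = z ∧ i = j)) (hsh : sharesVertex (x, i) (z, j)) :
    cInt s x i ≠ cInt s z j := by
  rcases hsh with h | h | h | h
  · -- x = z
    have hxz : x = z := h
    subst hxz
    have hij : i ≠ j := fun hc => hne ⟨rfl, hc⟩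
    exact proper_cross hsAll x x i j hij (fun m _ _ => rfl) (Or.inl rfl) (Or.inl rfl)
      hx.2 hz.2
  · -- x = z + e_j
    have hpt : ∀ m, x m = z m + if m = j then 1 else 0 := by
      intro m
      have := congrFun h m
      rwa [rightEnd_mk] at this
    by_cases hij : i = j
    · subst hij
      have hstep : x i = z i + 1 := by have := hpt i; rw [if_pos rfl] at this; omega
      have hrest' : ∀ m, m ≠ i → z m = x m := by
        intro m hm
        have := hpt m; rw [if_neg hm] at this; omega
      exact (proper_line hsAll z x i hrest' hstep (fun m hm => hz.1 m hm)).symm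
    · refine proper_cross hsAll x z i j hij ?_ ?_ ?_ hx.2 hz.2
      · intro m hmi hmj
        have := hpt m; rw [if_neg hmj] at this; omega
      · right; have := hpt j; rw [if_pos rfl] at this; omega
      · left; have := hpt i; rw [if_neg hij] at this; omega
  · -- z = x + e_i
    have hpt : ∀ m, z m = x m + if m = i then 1 else 0 := by
      intro m
      have h' := congrFun h m
      rw [rightEnd_mk] at h'
      have h'' : x m + (if m = i then 1 else 0) = z m := h'
      omega
    by_cases hij : i = j
    · subst hij
      have hstep : z i = x i + 1 := by have := hpt i; rw [if_pos rfl] at this; omega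
      have hrest' : ∀ m, m ≠ i → x m = z m := by
        intro m hm
        have := hpt m; rw [if_neg hm] at this; omega
      exact proper_line hsAll x z i hrest' hstep (fun m hm => hx.1 m hm)
    · refine proper_cross hsAll x z i j hij ?_ ?_ ?_ hx.2 hz.2
      · intro m hmi hmj
        have := hpt m; rw [if_neg hmi] at this; omega
      · left; have := hpt j; rw [if_neg (Ne.symm hij)] at this; omega
      · right; have := hpt i; rw [if_pos rfl] at this; omega
  · -- x + e_i = z + e_j
    have hpt : ∀ m, x m + (if m = i then 1 else 0) = z m + if m = j then 1 else 0 := by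
      intro m
      have := congrFun h m
      rw [rightEnd_mk, rightEnd_mk] at this
      omega
    by_cases hij : i = j
    · subst hij
      exfalso
      apply hne
      refine ⟨funext (fun m => ?_), rfl⟩
      have := hpt m
      omega
    · refine proper_cross hsAll x z i j hij ?_ ?_ ?_ hx.2 hz.2
      · intro m hmi hmj
        have := hpt m; rw [if_neg hmi, if_neg hmj] at this; omega
      · right; have := hpt j; rw [if_neg (Ne.symm hij), if_pos rfl] at this; omega
      · right; have := hpt i; rw [if_pos rfl, if_neg hij] at this; omega

lemma cInt_boundary {K : ℤ} {s : Fin n → ℤ}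
    (hsAll : ∀ m, s m % 2 = 0 ∧ 2 ≤ s m ∧ s m ≤ 4 * K - 2)
    (x : Fin n → ℤ) (i : Fin n)
    (hm : ∀ m, m ≠ i → 0 ≤ x m ∧ x m ≤ 4 * K + 2)
    (hxi : x i = -1 ∨ x i = 4 * K + 2) :
    cInt s x i = 2 * i.1 := by
  obtain ⟨e1, e2, e3⟩ := hsAll i
  have hLo : ¬ Lo (s i) (x i) := by
    unfold Lo
    rcases hxi with h | h <;> rw [h] <;> omega
  have hD : ¬ Defect s x i := fun D => hLo D.1
  have hSp : ¬ (suppF s x i = ∅ ∧ x i = s i + 1) := by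
    rintro ⟨-, h⟩
    omega
  rw [cInt_pair hD hSp]
  have hb := DefPos_bounds hsAll hm
  unfold phiF
  split_ifs <;> omega

lemma cInt_eq_special {s : Fin n → ℤ} {x : Fin n → ℤ} {i : Fin n}
    (h : cInt s x i = 2 * n) (hn : 1 ≤ n) : suppF s x i = ∅ ∧ x i = s i + 1 := by
  by_cases h1 : Defect s x i
  · exfalso
    rw [cInt_defect h1] at h
    have hb1 := (partnerF s x i).isLt
    have hb2 := phiF_mem (DefPos s x (partnerF s x i))
      (if Lo (s (partnerF s x i)) (x (partnerF s x i)) then x (partnerF s x i) - 1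
       else x (partnerF s x i))
    omega
  · by_cases h2 : suppF s x i = ∅ ∧ x i = s i + 1
    · exact h2
    · exfalso
      rw [cInt_pair h1 h2] at h
      have hb1 := i.isLt
      have hb2 := phiF_mem (DefPos s x i) (x i)
      omega

end
end CubeCol

/-- Let `d = 4k+2` and let `t ∈ ℤ^n` have all coordinates even with `|t_i| ≤ 2k-2`. For the
cube `R = [0,d]^n` there is a proper edge `(2n+1)`-coloring of the edges in and adjacent to
`R` such that (1) for each `i` all edges adjacent to `R` parallel to `e_i` have the same
color `c_i`, and (2) the `(2n+1)`-st color is only used on edges of the `t`-shifted core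
`K + t`, where `K = [2k, 2k+2]^n`. -/
theorem cube_shifted_core_coloring (n k : ℕ) (hn : 1 ≤ n) (t : Fin n → ℤ)
    (ht : ∀ i, Even (t i) ∧ |t i| ≤ 2 * (k : ℤ) - 2) :
    ∃ (c : GridEdge n → Fin (2 * n + 1)) (col : Fin n → Fin (2 * n + 1)),
      (∀ e f : GridEdge n,
        (edgeIn 0 (fun _ => 4 * k + 2) e ∨ edgeAdj 0 (fun _ => 4 * k + 2) e) →
        (edgeIn 0 (fun _ => 4 * k + 2) f ∨ edgeAdj 0 (fun _ => 4 * k + 2) f) →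
        e ≠ f → sharesVertex e f → c e ≠ c f) ∧
      (∀ e : GridEdge n, edgeAdj 0 (fun _ => 4 * k + 2) e → c e = col e.2) ∧
      (∀ e : GridEdge n,
        (edgeIn 0 (fun _ => 4 * k + 2) e ∨ edgeAdj 0 (fun _ => 4 * k + 2) e) →
        c e = ⟨2 * n, by omega⟩ →
        edgeIn (fun i => (2 * k : ℤ) + t i) (fun _ => 2) e) := by
    classical
  set s : Fin n → ℤ := fun i => 2 * (k : ℤ) + t i with hsdef
  have hsm : ∀ m, s m = 2 * (k : ℤ) + t m := fun m => rfl
  have hsAll : ∀ m, s m % 2 = 0 ∧ 2 ≤ s m ∧ s m ≤ 4 * (k : ℤ) - 2 := by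
    intro m
    obtain ⟨he, hb⟩ := ht m
    rw [Int.even_iff] at he
    rw [abs_le] at hb
    rw [hsm m]
    omega
  refine ⟨fun e => ⟨(CubeCol.cInt s e.1 e.2).toNat, ?_⟩, fun i => ⟨2 * i.1, by omega⟩,
    ?_, ?_, ?_⟩
  · have := CubeCol.cInt_bounds s e.1 e.2
    omega
  · rintro ⟨x, i⟩ ⟨z, j⟩ hex hez hne hsh
    have hb1 := CubeCol.cInt_bounds s x i
    have hb2 := CubeCol.cInt_bounds s z j
    rw [CubeCol.rel_iff] at hex hez
    have hne' : ¬ (x = z ∧ i = j) := by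
      rintro ⟨h1, h2⟩
      exact hne (by rw [h1, h2])
    have hmain := CubeCol.proper_main (K := (k : ℤ)) hsAll x z i j hex hez hne' hsh
    intro hc
    simp only [Fin.mk.injEq] at hc
    exact hmain (by omega)
  · rintro ⟨x, i⟩ hadj
    rw [CubeCol.edgeAdj_iff] at hadj
    have hbd := CubeCol.cInt_boundary (K := (k : ℤ)) hsAll x i hadj.1 hadj.2
    apply Fin.ext
    show (CubeCol.cInt s x i).toNat = 2 * i.1
    omega
  · rintro ⟨x, i⟩ hrel hc
    have hb := CubeCol.cInt_bounds s x i
    simp only [Fin.mk.injEq] at hc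
    have h2n : CubeCol.cInt s x i = 2 * n := by omega
    have hsp := CubeCol.cInt_eq_special h2n hn
    have hcoords := CubeCol.suppF_empty_iff.1 hsp.1
    have hxi := hsp.2
    constructor
    · intro m
      show (2 * (k : ℤ) + t m) ≤ x m ∧ x m ≤ (2 * (k : ℤ) + t m) + ((2 : ℕ) : ℤ)
      have hsm' := hsm m
      by_cases hm : m = i
      · subst hm
        push_cast
        omega
      · have := hcoords m hm
        push_cast
        omega
    · intro m
      rw [CubeCol.rightEnd_mk]
      show (2 * (k : ℤ) + t m) ≤ x m + _ ∧ x m + _ ≤ (2 * (k : ℤ) + t m) + ((2 : ℕ) : ℤ)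
      have hsm' := hsm m
      by_cases hm : m = i
      · subst hm
        rw [if_pos rfl]
        push_cast
        omega
      · rw [if_neg hm]
        have := hcoords m hm
        push_cast
        omega
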